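/- For any integers l ≥ 1 and α with 2^{l−1} ≤ α < 2^l − 1, the minimum of the quantity t_l · 2^{l−1} + Σ_{i=1}^{l−1} (t_i − 1)·2^{i−1} over integer choices 1 ≤ t_i ≤ B (for each i, with B ≥ 2), subject to the constraint that this quantity exceeds α, equals α + 1. -/

import Mathlib

/-!
Write `n = q·2^k + r` with `r < 2^k`. The binary digits of `r` serve as `t_i - 1 ∈ {0, 1}` for
`i ≤ k`, and `t_{k+1} = q` lies in `[1, B]` as soon as `2^k ≤ n < (B + 1)·2^k`. This range
contains `α + 1`, which is therefore attained; minimality is immediate since admissible values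
exceed `α`.
-/

open Finset

theorem Nat.sum_Icc_div_two_pow_mod_two_mul_two_pow (n k : ℕ) :
    ∑ i ∈ Icc 1 k, n / 2 ^ (i - 1) % 2 * 2 ^ (i - 1) = n % 2 ^ k := by
  induction k with
  | zero => simp [Nat.mod_one]
  | succ k ih =>
    rw [sum_Icc_succ_top (by omega), ih, Nat.add_sub_cancel, pow_succ, Nat.mod_mul]
    ring

theorem exists_digits_eq_mul_two_pow_add_sum (B k n : ℕ) (hB : 2 ≤ B) (hn : 2 ^ k ≤ n)
    (hnB : n < 2 ^ k * (B + 1)) :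
    ∃ t : ℕ → ℕ, (∀ i ∈ Icc 1 (k + 1), 1 ≤ t i ∧ t i ≤ B) ∧
      n = t (k + 1) * 2 ^ k + ∑ i ∈ Icc 1 k, (t i - 1) * 2 ^ (i - 1) := by
  have hq : 1 ≤ n / 2 ^ k ∧ n / 2 ^ k ≤ B :=
    ⟨(Nat.one_le_div_iff (by positivity)).2 hn, Nat.lt_succ_iff.1 (Nat.div_lt_of_lt_mul hnB)⟩
  refine ⟨fun i => if i ≤ k then n / 2 ^ (i - 1) % 2 + 1 else n / 2 ^ k, ?_, ?_⟩
  · intro i _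
    dsimp only
    split_ifs
    · omega
    · exact hq
  · have hsum : ∑ i ∈ Icc 1 k, ((if i ≤ k then n / 2 ^ (i - 1) % 2 + 1 else n / 2 ^ k) - 1) *
        2 ^ (i - 1) = n % 2 ^ k := by
      rw [← Nat.sum_Icc_div_two_pow_mod_two_mul_two_pow]
      refine sum_congr rfl fun i hi => ?_
      rw [if_pos (mem_Icc.1 hi).2, Nat.add_sub_cancel]
    simp only [hsum, if_neg (Nat.not_succ_le_self k)]
    exact (Nat.div_add_mod' n (2 ^ k)).symm

theorem alpha_minimal_receptive_general (B l α : ℕ) (hB : 2 ≤ B)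
    (h1 : 2 ^ (l - 1) ≤ α) (h2 : α < 2 ^ l - 1) :
    IsLeast {v : ℕ | α < v ∧ ∃ t : ℕ → ℕ,
        (∀ i ∈ Finset.Icc 1 l, 1 ≤ t i ∧ t i ≤ B) ∧
        v = t l * 2 ^ (l - 1) +
              ∑ i ∈ Finset.Icc 1 (l - 1), (t i - 1) * 2 ^ (i - 1)}
      (α + 1) := by
  refine ⟨⟨lt_add_one α, ?_⟩, fun v hv => hv.1⟩
  obtain ⟨k, rfl⟩ : ∃ k, l = k + 1 :=
    Nat.exists_eq_succ_of_ne_zero (by rintro rfl; simp at h2)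
  rw [Nat.add_sub_cancel] at h1 ⊢
  refine exists_digits_eq_mul_two_pow_add_sum B k (α + 1) hB (by omega) ?_
  calc α + 1 < 2 ^ k * 2 := by rw [pow_succ] at h2; omega
    _ ≤ 2 ^ k * (B + 1) := Nat.mul_le_mul_left _ (by omega)

/-- For `2^(l-1) ≤ α < 2^l - 1`, the minimum of
`t_l·2^(l-1) + Σ_{i=1}^{l-1} (t_i - 1)·2^(i-1)` over integer choices
`1 ≤ t_i ≤ B`, subject to the value exceeding `α`, equals `α + 1`. -/
theorem alpha_minimal_receptive (B l α : ℕ) (hB : 2 ≤ B) (hl : 1 ≤ l)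
    (h1 : 2 ^ (l - 1) ≤ α) (h2 : α < 2 ^ l - 1) :
    IsLeast {v : ℕ | α < v ∧ ∃ t : ℕ → ℕ,
        (∀ i ∈ Finset.Icc 1 l, 1 ≤ t i ∧ t i ≤ B) ∧
        v = t l * 2 ^ (l - 1) +
              ∑ i ∈ Finset.Icc 1 (l - 1), (t i - 1) * 2 ^ (i - 1)}
      (α + 1) :=
  alpha_minimal_receptive_general B l α hB h1 h2
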